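/- Let $\Omega_0 \subset \mathbb{R}^N$ be a set of finite perimeter with Ahlfors regular topological boundary and $\operatorname{spt}\mu_{\Omega_0} = \partial\Omega_0$. Define $\mathcal{O}_0 = \{x : \exists r > 0, |B(x,r) \setminus \Omega_0| = 0\}$ and $\mathcal{O}_1 = \{x : \exists r > 0, |B(x,r) \cap \Omega_0| = 0\}$. Then $\mathcal{O}_0$ and $\mathcal{O}_1$ are open, $\mathcal{O}_0$ is equivalent to $\Omega_0$ (i.e., $|\mathcal{O}_0 \Delta \Omega_0| = 0$), and $\partial\mathcal{O}_0 = \partial\mathcal{O}_1 = \operatorname{spt}\mu_{\mathcal{O}_0} = \operatorname{spt}\mu_{\Omega_0}$. -/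

import Mathlib

open MeasureTheory Metric Filter Set Bornology
open scoped ENNReal Topology NNReal RealInnerProductSpace

noncomputable section

/-- Points of Lebesgue density `1` of a set in `ℝ^N`. -/
def densityOnePts {N : ℕ} (E : Set (EuclideanSpace ℝ (Fin N))) :
    Set (EuclideanSpace ℝ (Fin N)) :=
  {x | Tendsto (fun r : ℝ => volume (E ∩ ball x r) / volume (ball x r)) (𝓝[>] 0) (𝓝 1)}

/-- Points of Lebesgue density `0` of a set in `ℝ^N`. -/
def densityZeroPts {N : ℕ} (E : Set (EuclideanSpace ℝ (Fin N))) :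
    Set (EuclideanSpace ℝ (Fin N)) :=
  {x | Tendsto (fun r : ℝ => volume (E ∩ ball x r) / volume (ball x r)) (𝓝[>] 0) (𝓝 0)}

/-- The essential boundary `∂*E`: points of density neither `0` nor `1`. -/
def essBdry {N : ℕ} (E : Set (EuclideanSpace ℝ (Fin N))) :
    Set (EuclideanSpace ℝ (Fin N)) :=
  (densityOnePts E ∪ densityZeroPts E)ᶜ

/-- Relative perimeter of `E` in `Ω` (De Giorgi–Federer):
`P(E,Ω) = H^{N-1}(∂*E ∩ Ω)`. -/
def perim {N : ℕ} (E Ω : Set (EuclideanSpace ℝ (Fin N))) : ℝ≥0∞ :=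
  μH[(N : ℝ) - 1] (essBdry E ∩ Ω)

/-- Support of the Gauss–Green measure `μ_E`, whose total variation is
`H^{N-1} ⌊ ∂*E`. -/
def sptGG {N : ℕ} (E : Set (EuclideanSpace ℝ (Fin N))) :
    Set (EuclideanSpace ℝ (Fin N)) :=
  {x | ∀ r : ℝ, 0 < r → 0 < μH[(N : ℝ) - 1] (essBdry E ∩ ball x r)}

/-- The Lebesgue volume `ω_N` of the unit ball of `ℝ^N`. -/
def omegaVol (N : ℕ) : ℝ := (volume (ball (0 : EuclideanSpace ℝ (Fin N)) 1)).toReal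

/-- The measure-theoretic interior of `Ω₀`. -/
def O0set {N : ℕ} (Om0 : Set (EuclideanSpace ℝ (Fin N))) : Set (EuclideanSpace ℝ (Fin N)) :=
  {x | ∃ r : ℝ, 0 < r ∧ volume (ball x r \ Om0) = 0}

/-- The measure-theoretic exterior of `Ω₀`. -/
def O1set {N : ℕ} (Om0 : Set (EuclideanSpace ℝ (Fin N))) : Set (EuclideanSpace ℝ (Fin N)) :=
  {x | ∃ r : ℝ, 0 < r ∧ volume (ball x r ∩ Om0) = 0}

/-!
Points of `O0set Ω₀ ∪ O1set Ω₀` have density `1` or `0`, and this set is open, so it misses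
both the essential boundary and the support of `μ_{Ω₀}`; on the other hand its complement always
lies in `∂Ω₀`. Hence `spt μ_{Ω₀} = ∂Ω₀` forces `∂Ω₀ = (O0set Ω₀ ∪ O1set Ω₀)ᶜ`. The upper Ahlfors
bound gives `∂Ω₀` locally finite `H^{N-1}`-measure, so it is Lebesgue-null. Then `O0set Ω₀` differs
from `Ω₀` by a null set, which leaves the Gauss–Green support unchanged, and both `O0set Ω₀` and
`O1set Ω₀` have boundary exactly `(O0set Ω₀ ∪ O1set Ω₀)ᶜ`.
-/

section HausdorffNull

open Module

variable {E : Type*} [NormedAddCommGroup E] [NormedSpace ℝ E] [FiniteDimensional ℝ E]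
  [MeasurableSpace E] [BorelSpace E]

/-- A Haar measure is a multiple of `μH[finrank ℝ E]`, which vanishes on sets of finite
lower-dimensional Hausdorff measure. -/
theorem measure_eq_zero_of_hausdorffMeasure_ne_top (μ : Measure E)
    [μ.IsAddHaarMeasure] {d : ℝ} (hd : d < finrank ℝ E) {u : Set E} (hu : μH[d] u ≠ ∞) :
    μ u = 0 := by
  have hμ : μ ≪ μH[finrank ℝ E] := Measure.absolutelyContinuous_isAddHaarMeasure _ _
  exact hμ ((Measure.hausdorffMeasure_zero_or_top hd u).resolve_right hu)

theorem measure_eq_zero_of_locally_hausdorffMeasure_ne_top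
    (μ : Measure E) [μ.IsAddHaarMeasure] {d : ℝ} (hd : d < finrank ℝ E) {t : Set E}
    (ht : ∀ x ∈ t, ∃ r > 0, μH[d] (t ∩ ball x r) ≠ ∞) : μ t = 0 := by
  refine measure_null_of_locally_null t fun x hx => ?_
  obtain ⟨r, hr, hfin⟩ := ht x hx
  exact ⟨t ∩ ball x r, inter_mem_nhdsWithin _ (ball_mem_nhds x hr),
    measure_eq_zero_of_hausdorffMeasure_ne_top μ hd hfin⟩

end HausdorffNull

section MeasureTheoreticInterior

variable {N : ℕ} {s t : Set (EuclideanSpace ℝ (Fin N))}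

theorem O0set_eq_O1set_compl (s : Set (EuclideanSpace ℝ (Fin N))) : O0set s = O1set sᶜ := by
  simp only [O0set, O1set, sdiff_eq]

theorem O1set_eq_O0set_compl (s : Set (EuclideanSpace ℝ (Fin N))) : O1set s = O0set sᶜ := by
  rw [O0set_eq_O1set_compl, compl_compl]

theorem O1set_eq_compl_support (s : Set (EuclideanSpace ℝ (Fin N))) :
    O1set s = (volume.restrict s).supportᶜ := by
  ext x
  rw [mem_compl_iff, nhds_basis_ball.notMem_measureSupport]
  simp only [O1set, mem_ofPred_eq, Measure.restrict_apply measurableSet_ball]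

theorem isOpen_O1set : IsOpen (O1set s) :=
  O1set_eq_compl_support s ▸ Measure.isOpen_compl_support

theorem isOpen_O0set : IsOpen (O0set s) :=
  O0set_eq_O1set_compl s ▸ isOpen_O1set

theorem volume_O1set_inter : volume (O1set s ∩ s) = 0 := by
  rw [← Measure.restrict_apply isOpen_O1set.measurableSet, O1set_eq_compl_support]
  exact Measure.measure_compl_support

theorem volume_O0set_diff : volume (O0set s \ s) = 0 := by
  rw [O0set_eq_O1set_compl, sdiff_eq]
  exact volume_O1set_inter

theorem disjoint_O0set_O1set : Disjoint (O0set s) (O1set s) := by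
  rw [disjoint_iff_inter_eq_empty, eq_empty_iff_forall_notMem]
  rintro x ⟨⟨r₀, hr₀, h₀⟩, ⟨r₁, hr₁, h₁⟩⟩
  have hsub : ball x (min r₀ r₁) ⊆ (ball x r₀ \ s) ∪ (ball x r₁ ∩ s) := fun z hz => by
    by_cases hzs : z ∈ s
    · exact Or.inr ⟨ball_subset_ball (min_le_right _ _) hz, hzs⟩
    · exact Or.inl ⟨ball_subset_ball (min_le_left _ _) hz, hzs⟩
  exact (measure_ball_pos volume x (lt_min hr₀ hr₁)).ne'
    (measure_mono_null hsub (measure_union_null h₀ h₁))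

theorem O1set_congr_ae (h : s =ᵐ[volume] t) : O1set s = O1set t := by
  have hball : ∀ x r, volume (ball x r ∩ s) = volume (ball x r ∩ t) := fun x r =>
    measure_congr ((ae_eq_refl _).inter h)
  simp only [O1set, hball]

theorem compl_O1set_subset_closure : (O1set s)ᶜ ⊆ closure s := by
  intro x hx
  by_contra hcl
  obtain ⟨r, hr, hball⟩ := Metric.isOpen_iff.mp isClosed_closure.isOpen_compl x hcl
  refine hx ⟨r, hr, ?_⟩
  have hempty : ball x r ∩ s = ∅ := eq_empty_of_forall_notMem fun z hz =>
    hball hz.1 (subset_closure hz.2)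
  rw [hempty, measure_empty]

theorem compl_O0set_union_O1set_subset_frontier : (O0set s ∪ O1set s)ᶜ ⊆ frontier s := by
  rw [compl_union, frontier_eq_closure_inter_closure, O0set_eq_O1set_compl]
  exact inter_comm _ _ ▸ inter_subset_inter compl_O1set_subset_closure compl_O1set_subset_closure

theorem O0set_ae_eq (h : volume (O0set s ∪ O1set s)ᶜ = 0) : O0set s =ᵐ[volume] s := by
  refine ae_eq_set.mpr ⟨volume_O0set_diff, measure_mono_null
    (t := (O1set s ∩ s) ∪ (O0set s ∪ O1set s)ᶜ) (fun z hz => ?_)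
    (measure_union_null volume_O1set_inter h)⟩
  by_cases hz₁ : z ∈ O1set s
  · exact Or.inl ⟨hz₁, hz.1⟩
  · exact Or.inr (compl_union _ _ ▸ ⟨hz.2, hz₁⟩)

theorem frontier_O0set (h : volume (O0set s ∪ O1set s)ᶜ = 0) :
    frontier (O0set s) = (O0set s ∪ O1set s)ᶜ := by
  rw [isOpen_O0set.frontier_eq, compl_union]
  apply Subset.antisymm
  · rintro x ⟨hcl, hx₀⟩
    exact ⟨hx₀, (disjoint_O0set_O1set.closure_left isOpen_O1set).notMem_of_mem_left hcl⟩
  · rintro x ⟨hx₀, hx₁⟩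
    refine ⟨compl_O1set_subset_closure ?_, hx₀⟩
    rwa [O1set_congr_ae (O0set_ae_eq h)]

theorem frontier_O1set (h : volume (O0set s ∪ O1set s)ᶜ = 0) :
    frontier (O1set s) = (O0set s ∪ O1set s)ᶜ := by
  have h' := frontier_O0set (s := sᶜ)
    (by rwa [← O1set_eq_O0set_compl, ← O0set_eq_O1set_compl, union_comm])
  rwa [← O1set_eq_O0set_compl, ← O0set_eq_O1set_compl, union_comm] at h'

end MeasureTheoreticInterior

section GaussGreenSupport

variable {N : ℕ} {s t : Set (EuclideanSpace ℝ (Fin N))}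

theorem O0set_subset_densityOnePts : O0set s ⊆ densityOnePts s := by
  rintro x ⟨r, hr, hnull⟩
  refine tendsto_const_nhds.congr' ?_
  filter_upwards [Ioo_mem_nhdsGT hr] with ρ hρ
  have hfull : volume (s ∩ ball x ρ) = volume (ball x ρ) := by
    rw [inter_comm, ← sdiff_sdiff_right_self]
    exact measure_sdiff_null (measure_mono_null (sdiff_subset_sdiff_left
      (ball_subset_ball hρ.2.le)) hnull)
  rw [hfull, ENNReal.div_self (measure_ball_pos volume x hρ.1).ne' measure_ball_lt_top.ne]

theorem O1set_subset_densityZeroPts : O1set s ⊆ densityZeroPts s := by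
  rintro x ⟨r, hr, hnull⟩
  refine tendsto_const_nhds.congr' ?_
  filter_upwards [Ioo_mem_nhdsGT hr] with ρ hρ
  have hzero : volume (s ∩ ball x ρ) = 0 := by
    rw [inter_comm]
    exact measure_mono_null (inter_subset_inter_left s (ball_subset_ball hρ.2.le)) hnull
  rw [hzero, ENNReal.zero_div]

theorem essBdry_subset_compl_O0set_union_O1set : essBdry s ⊆ (O0set s ∪ O1set s)ᶜ :=
  compl_subset_compl.mpr (union_subset_union O0set_subset_densityOnePts
    O1set_subset_densityZeroPts)

theorem sptGG_subset_compl_O0set_union_O1set : sptGG s ⊆ (O0set s ∪ O1set s)ᶜ := by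
  intro x hx hx'
  obtain ⟨r, hr, hball⟩ := Metric.isOpen_iff.mp (isOpen_O0set.union isOpen_O1set) x hx'
  have hempty : essBdry s ∩ ball x r = ∅ := eq_empty_of_forall_notMem fun y hy =>
    essBdry_subset_compl_O0set_union_O1set hy.1 (hball hy.2)
  exact (hx r hr).ne' (by rw [hempty, measure_empty])

theorem frontier_eq_compl_O0set_union_O1set (h : sptGG s = frontier s) :
    frontier s = (O0set s ∪ O1set s)ᶜ :=
  (h ▸ sptGG_subset_compl_O0set_union_O1set).antisymm compl_O0set_union_O1set_subset_frontier

theorem sptGG_congr_ae (h : s =ᵐ[volume] t) : sptGG s = sptGG t := by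
  have hball : ∀ x r, volume (s ∩ ball x r) = volume (t ∩ ball x r) := fun x r =>
    measure_congr (h.inter (ae_eq_refl _))
  simp only [sptGG, essBdry, densityOnePts, densityZeroPts, hball]

end GaussGreenSupport

theorem stmt_11_general {N : ℕ} (Om0 : Set (EuclideanSpace ℝ (Fin N)))
    (hAR : ∃ C1 C2 : ℝ, 0 < C1 ∧ 0 < C2 ∧ ∀ x ∈ frontier Om0, ∀ r : ℝ, 0 < r → r ≤ 1 →
      ENNReal.ofReal (C1 * r ^ (N - 1)) ≤ μH[(N : ℝ) - 1] (frontier Om0 ∩ ball x r) ∧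
      μH[(N : ℝ) - 1] (frontier Om0 ∩ ball x r) ≤ ENNReal.ofReal (C2 * r ^ (N - 1)))
    (hspt : sptGG Om0 = frontier Om0) :
    IsOpen (O0set Om0) ∧ IsOpen (O1set Om0) ∧
    volume (symmDiff (O0set Om0) Om0) = 0 ∧
    frontier (O0set Om0) = frontier (O1set Om0) ∧
    frontier (O0set Om0) = sptGG (O0set Om0) ∧
    sptGG (O0set Om0) = sptGG Om0 := by
  obtain ⟨C1, C2, -, -, hbound⟩ := hAR
  have hfrontier : volume (frontier Om0) = 0 :=
    measure_eq_zero_of_locally_hausdorffMeasure_ne_top volume (d := N - 1) (by simp) fun x hx =>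
      ⟨1, one_pos, ((hbound x hx 1 one_pos le_rfl).2.trans_lt ENNReal.ofReal_lt_top).ne⟩
  have hbdry := frontier_eq_compl_O0set_union_O1set hspt
  have hnull : volume (O0set Om0 ∪ O1set Om0)ᶜ = 0 := hbdry ▸ hfrontier
  have hae := O0set_ae_eq hnull
  refine ⟨isOpen_O0set, isOpen_O1set, measure_symmDiff_eq_zero_iff.mpr hae, ?_, ?_,
    sptGG_congr_ae hae⟩
  · rw [frontier_O0set hnull, frontier_O1set hnull]
  · rw [frontier_O0set hnull, sptGG_congr_ae hae, hspt, hbdry]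

theorem stmt_11 {N : ℕ} (Om0 : Set (EuclideanSpace ℝ (Fin N))) (hmeas : MeasurableSet Om0)
    (hper : perim Om0 Set.univ < ⊤)
    (hAR : ∃ C1 C2 : ℝ, 0 < C1 ∧ 0 < C2 ∧ ∀ x ∈ frontier Om0, ∀ r : ℝ, 0 < r → r ≤ 1 →
      ENNReal.ofReal (C1 * r ^ (N - 1)) ≤ μH[(N : ℝ) - 1] (frontier Om0 ∩ ball x r) ∧
      μH[(N : ℝ) - 1] (frontier Om0 ∩ ball x r) ≤ ENNReal.ofReal (C2 * r ^ (N - 1)))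
    (hspt : sptGG Om0 = frontier Om0) :
    IsOpen (O0set Om0) ∧ IsOpen (O1set Om0) ∧
    volume (symmDiff (O0set Om0) Om0) = 0 ∧
    frontier (O0set Om0) = frontier (O1set Om0) ∧
    frontier (O0set Om0) = sptGG (O0set Om0) ∧
    sptGG (O0set Om0) = sptGG Om0 :=
  stmt_11_general Om0 hAR hspt

end
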